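/- Let X, Y, Z be nonempty words over the alphabet {L, M, R} with |X| = |Z| < |Y|, satisfying XY = ȲZ. Write |Y| = q·|X| + r with 0 ≤ r < |X|. If q is even, then there exist words Y₀ of length r and X₀ such that X̄ = Y₀X₀, Z = X̄₀Y₀, and Y = (Y₀X₀·(Y₀X₀)‾)^{q/2} Y₀; in particular Y is a broken alternating word. -/

import Mathlib

/-- The three-letter alphabet {L, M, R}. -/
inductive Letter : Type
  | L | M | R
deriving DecidableEq, Repr

/-- Complementation on letters: R̄ = L, L̄ = R, M̄ = M. -/
def Letter.bar : Letter → Letter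
  | .L => .R
  | .M => .M
  | .R => .L

/-- Complement of a word (letterwise). -/
def comp (w : List Letter) : List Letter := w.map Letter.bar

/-- k-fold concatenation of a word with itself. -/
def npow (w : List Letter) : ℕ → List Letter
  | 0 => []
  | n + 1 => w ++ npow w n

/-- A broken alternating word: w = (w₁ w̄₁)^n w₀ with n ≥ 1 and w₀ a prefix of w₁ w̄₁. -/
def BrokenAlternating (w : List Letter) : Prop :=
  ∃ (w₁ w₀ : List Letter) (n : ℕ), 0 < n ∧ w₀ <+: (w₁ ++ comp w₁) ∧
    w = npow (w₁ ++ comp w₁) n ++ w₀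

/-!
Compare both sides of `X ++ Y = comp Y ++ Z` block by block. As long as `Y` has at least
`2 * |X|` letters left, its first block is forced to be `X̄` and its second `X`, after which the
same equation holds for the rest of `Y`; so `Y = (X̄ X)^k Y'` with `|Y'| = r < |X|`. For such a
short `Y'` the equation says that `Y'` is the prefix of `X̄` of length `r` and that `Z` is the
rest of `X` followed by `Y'`.
-/

@[simp]
lemma Letter.bar_bar (a : Letter) : a.bar.bar = a := by cases a <;> rfl

@[simp]
lemma comp_comp (w : List Letter) : comp (comp w) = w := by
  simp [comp, Function.comp_def]

@[simp]
lemma comp_append (u v : List Letter) : comp (u ++ v) = comp u ++ comp v :=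
  List.map_append

@[simp]
lemma length_comp (w : List Letter) : (comp w).length = w.length :=
  List.length_map _

lemma comp_take (n : ℕ) (w : List Letter) : comp (w.take n) = (comp w).take n :=
  List.map_take

lemma comp_drop (n : ℕ) (w : List Letter) : comp (w.drop n) = (comp w).drop n :=
  List.map_drop

section

variable {X Y Z : List Letter}

lemma eq_take_comp_of_append_eq_comp_append (heq : X ++ Y = comp Y ++ Z)
    (hlen : Y.length ≤ X.length) : Y = (comp X).take Y.length ∧ Z = X.drop Y.length ++ Y := by
  constructor
  · have hprefix := congrArg (List.take Y.length) heq
    rw [List.take_append_of_le_length hlen, List.take_left' (length_comp Y)] at hprefix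
    rw [← comp_take, hprefix, comp_comp]
  · have hsuffix := congrArg (List.drop Y.length) heq
    rwa [List.drop_append_of_le_length hlen, List.drop_left' (length_comp Y), eq_comm] at hsuffix

lemma exists_eq_comp_append_of_append_eq_comp_append (heq : X ++ Y = comp Y ++ Z)
    (hlen : X.length ≤ Y.length) : ∃ W, Y = comp X ++ W ∧ comp X ++ W = comp W ++ Z := by
  obtain ⟨V, W, rfl, hV⟩ : ∃ V W, Y = V ++ W ∧ V.length = X.length :=
    ⟨Y.take X.length, Y.drop X.length, (List.take_append_drop _ _).symm,
      List.length_take_of_le hlen⟩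
  rw [comp_append, List.append_assoc] at heq
  obtain ⟨hXV, hW⟩ := List.append_inj heq (by rw [length_comp, hV])
  obtain rfl : V = comp X := by rw [hXV, comp_comp]
  exact ⟨W, rfl, hW⟩

lemma exists_eq_comp_append_append_of_append_eq_comp_append (heq : X ++ Y = comp Y ++ Z)
    (hlen : 2 * X.length ≤ Y.length) :
    ∃ W, Y = comp X ++ X ++ W ∧ X ++ W = comp W ++ Z := by
  obtain ⟨V, rfl, hV⟩ := exists_eq_comp_append_of_append_eq_comp_append heq (by omega)
  obtain ⟨W, rfl, hW⟩ :=
    exists_eq_comp_append_of_append_eq_comp_append hV (by simp only [List.length_append, length_comp] at hlen ⊢; omega)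
  rw [comp_comp] at hW
  exact ⟨W, by rw [comp_comp, List.append_assoc], hW⟩

lemma eq_npow_append_take_of_append_eq_comp_append {r : ℕ} (hr : r ≤ X.length) :
    ∀ k : ℕ, ∀ Y : List Letter, X ++ Y = comp Y ++ Z → Y.length = 2 * k * X.length + r →
      Y = npow (comp X ++ X) k ++ (comp X).take r ∧ Z = X.drop r ++ (comp X).take r
  | 0, Y, heq, hlen => by
    obtain ⟨hY, hZ⟩ := eq_take_comp_of_append_eq_comp_append heq (by omega)
    rw [hlen, Nat.mul_zero, Nat.zero_mul, Nat.zero_add] at hY hZ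
    exact ⟨hY, hY ▸ hZ⟩
  | k + 1, Y, heq, hlen => by
    obtain ⟨W, rfl, hW⟩ :=
      exists_eq_comp_append_append_of_append_eq_comp_append heq (by rw [hlen]; nlinarith)
    obtain ⟨hW, hZ⟩ := eq_npow_append_take_of_append_eq_comp_append hr k W hW
      (by simp only [List.length_append, length_comp] at hlen; linarith)
    exact ⟨by rw [hW, npow]; simp only [List.append_assoc], hZ⟩

end

theorem stmt_8_general (X Y Z : List Letter)
    (hXY : X.length < Y.length)
    (heq : X ++ Y = comp Y ++ Z)
    (q r : ℕ) (hqr : Y.length = q * X.length + r) (hrlt : r < X.length)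
    (hq : Even q) :
    ∃ (Y₀ X₀ : List Letter), Y₀.length = r ∧
      comp X = Y₀ ++ X₀ ∧
      Z = comp X₀ ++ Y₀ ∧
      Y = npow ((Y₀ ++ X₀) ++ comp (Y₀ ++ X₀)) (q / 2) ++ Y₀ ∧
      BrokenAlternating Y := by
  obtain ⟨k, rfl⟩ := hq
  have hk : (k + k) / 2 = k := by omega
  obtain ⟨hY, hZ⟩ := eq_npow_append_take_of_append_eq_comp_append hrlt.le k Y heq
    (by rw [hqr, two_mul])
  have hk_pos : 0 < k := Nat.pos_of_ne_zero <| by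
    rintro rfl
    omega
  refine ⟨(comp X).take r, (comp X).drop r, ?_, (List.take_append_drop _ _).symm, ?_, ?_, ?_⟩
  · simp only [List.length_take, length_comp]; omega
  · rw [hZ, ← comp_drop, comp_comp]
  · rwa [List.take_append_drop, comp_comp, hk]
  · exact ⟨comp X, (comp X).take r, k, hk_pos,
      (List.take_prefix _ _).trans (List.prefix_append _ _), by rwa [comp_comp]⟩

theorem stmt_8 (X Y Z : List Letter) (hX : X ≠ []) (hY : Y ≠ []) (hZ : Z ≠ [])
    (hXZ : X.length = Z.length) (hXY : X.length < Y.length)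
    (heq : X ++ Y = comp Y ++ Z)
    (q r : ℕ) (hqr : Y.length = q * X.length + r) (hrlt : r < X.length)
    (hq : Even q) :
    ∃ (Y₀ X₀ : List Letter), Y₀.length = r ∧
      comp X = Y₀ ++ X₀ ∧
      Z = comp X₀ ++ Y₀ ∧
      Y = npow ((Y₀ ++ X₀) ++ comp (Y₀ ++ X₀)) (q / 2) ++ Y₀ ∧
      BrokenAlternating Y :=
  stmt_8_general X Y Z hXY heq q r hqr hrlt hq
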